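/- arXiv:1811.04561 — 2 statements merged into one kernel-verified Lean document; each statement's English description precedes it below -/
import Mathlib

section
/- Let $p$ be a prime and let $G$ and $G'$ be finite abelian $p$-groups. If for every $\alpha \in \mathbb{N}$ the number of elements of order $p^{\alpha}$ in $G$ equals the number of elements of order $p^{\alpha}$ in $G'$, then $G$ and $G'$ are isomorphic as groups. -/
open Finset

private def mulZModCongr {a b : ℕ} (h : a = b) :
    Multiplicative (ZMod a) ≃* Multiplicative (ZMod b) := by subst h; exact MulEquiv.refl _

private def mulPiCongrLeft' {ι ι' : Type*} (M : ι → Type*) [∀ i, Mul (M i)] (e : ι ≃ ι') :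
    (∀ i, M i) ≃* ∀ j, M (e.symm j) :=
  { Equiv.piCongrLeft' M e with map_mul' := fun _ _ => rfl }

private lemma cardPow_congr {G H : Type*} [Group G] [Group H] (f : G ≃* H) (m : ℕ) :
    Nat.card {x : G // x ^ m = 1} = Nat.card {x : H // x ^ m = 1} :=
  Nat.card_congr (f.toEquiv.subtypeEquiv fun x => by
    simp [← map_pow, map_eq_one_iff f f.injective])

private lemma cardPow_pi {ι : Type*} [Fintype ι] (M : ι → Type*) [∀ i, Group (M i)]
    [∀ i, Finite (M i)] (m : ℕ) :
    Nat.card {x : ∀ i, M i // x ^ m = 1} = ∏ i, Nat.card {y : M i // y ^ m = 1} := by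
  rw [← Nat.card_pi]
  exact Nat.card_congr ((Equiv.subtypeEquivRight (fun x => by simp [funext_iff])).trans
    (Equiv.subtypePiEquivPi))

private lemma cardPow_cyclic {C : Type*} [Group C] [Fintype C] [IsCyclic C] {p e : ℕ}
    (hp : p.Prime) (hC : Fintype.card C = p ^ e) (α : ℕ) :
    Nat.card {x : C // x ^ p ^ α = 1} = p ^ min e α := by
  classical
  have key : ∀ x : C, (x ^ p ^ α = 1 ↔ x ^ p ^ min e α = 1) := by
    intro x
    have hd : orderOf x ∣ p ^ e := hC ▸ orderOf_dvd_card
    obtain ⟨γ, hγe, hx⟩ := (Nat.dvd_prime_pow hp).1 hd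
    rw [← orderOf_dvd_iff_pow_eq_one, ← orderOf_dvd_iff_pow_eq_one, hx,
      Nat.pow_dvd_pow_iff_le_right hp.one_lt, Nat.pow_dvd_pow_iff_le_right hp.one_lt, le_min_iff]
    exact ⟨fun h => ⟨hγe, h⟩, fun h => h.2⟩
  rw [Nat.card_congr (Equiv.subtypeEquivRight key)]
  set m := p ^ min e α with hm
  have hm0 : 0 < m := pow_pos hp.pos _
  rw [Nat.card_eq_fintype_card, Fintype.card_subtype]
  refine le_antisymm ?_ ?_
  · exact IsCyclic.card_pow_eq_one_le hm0
  · obtain ⟨g, hg⟩ := IsCyclic.exists_generator (α := C)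
    set a := g ^ (p ^ (e - min e α)) with ha
    have hog : orderOf g = p ^ e := by
      rw [orderOf_eq_card_of_forall_mem_zpowers hg, Nat.card_eq_fintype_card, hC]
    have hoa : orderOf a = m := by
      rw [ha, orderOf_pow, hog, Nat.gcd_eq_right (pow_dvd_pow p (Nat.sub_le e _)),
        Nat.pow_div (Nat.sub_le e _) hp.pos, Nat.sub_sub_self (min_le_left e α)]
    have hsub : ∀ x : C, x ∈ Subgroup.zpowers a → x ^ m = 1 := by
      intro x hx
      have h2 := orderOf_dvd_of_mem_zpowers hx
      rw [hoa] at h2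
      exact orderOf_dvd_iff_pow_eq_one.1 h2
    calc m = Fintype.card (Subgroup.zpowers a) := by rw [Fintype.card_zpowers, hoa]
    _ ≤ _ := (Fintype.card_le_of_injective
        (fun x : Subgroup.zpowers a =>
          (⟨x.1, Finset.mem_filter.2 ⟨Finset.mem_univ _, hsub x.1 x.2⟩⟩ :
            {x : C // x ∈ Finset.univ.filter fun x => x ^ m = 1}))
        (fun x y hxy => Subtype.ext (by simpa using hxy))).trans_eq (by
        rw [Fintype.card_coe])

private lemma cardPow_eq_sum_orders {G : Type*} [Group G] [Finite G] {p : ℕ} (hp : p.Prime)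
    (α : ℕ) :
    Nat.card {x : G // x ^ p ^ α = 1} =
      ∑ β ∈ Finset.range (α + 1), Nat.card {x : G // orderOf x = p ^ β} := by
  classical
  cases nonempty_fintype G
  simp only [Nat.card_eq_fintype_card, Fintype.card_subtype]
  rw [← Finset.card_biUnion]
  · congr 1
    ext x
    simp only [Finset.mem_filter, Finset.mem_univ, true_and, Finset.mem_biUnion,
      Finset.mem_range, Nat.lt_succ_iff]
    rw [← orderOf_dvd_iff_pow_eq_one]
    constructor
    · intro hd
      obtain ⟨β, hβ, hx⟩ := (Nat.dvd_prime_pow hp).1 hd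
      exact ⟨β, hβ, hx⟩
    · rintro ⟨β, hβ, hx⟩
      rw [hx]
      exact pow_dvd_pow p hβ
  · intro β _ γ _ hβγ
    apply Finset.disjoint_filter.2
    intro x _ hx hx'
    exact hβγ (Nat.pow_right_injective hp.two_le (hx.symm.trans hx'))

private lemma min_sum_step {σ : Type*} [Fintype σ] (g : σ → ℕ) (α : ℕ) :
    ∑ i : σ, min (g i) (α + 1) = (∑ i : σ, min (g i) α) +
      (Finset.univ.filter fun i => α < g i).card := by
  classical
  rw [Finset.card_filter, ← Finset.sum_add_distrib]
  refine Finset.sum_congr rfl fun i _ => ?_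
  by_cases hi : α < g i <;> simp [hi] <;> omega

private lemma filter_lt_split {σ : Type*} [Fintype σ] (g : σ → ℕ) (k : ℕ) :
    (Finset.univ.filter fun i => k < g i).card =
      (Finset.univ.filter fun i => g i = k + 1).card +
        (Finset.univ.filter fun i => k + 1 < g i).card := by
  classical
  rw [← Finset.card_union_of_disjoint]
  · congr 1
    ext i
    simp only [Finset.mem_filter, Finset.mem_univ, true_and, Finset.mem_union]
    omega
  · apply Finset.disjoint_filter.2
    intro i _ hi
    omega

private lemma count_eq_of_min_sum {ι κ : Type*} [Fintype ι] [Fintype κ] (e : ι → ℕ) (f : κ → ℕ)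
    (he : ∀ i, e i ≠ 0) (hf : ∀ j, f j ≠ 0)
    (h : ∀ α, ∑ i, min (e i) α = ∑ j, min (f j) α) (k : ℕ) :
    Nat.card {i // e i = k} = Nat.card {j // f j = k} := by
  classical
  have hB : ∀ α, (Finset.univ.filter fun i => α < e i).card =
      (Finset.univ.filter fun j => α < f j).card := by
    intro α
    have h1 := h α; have h2 := h (α + 1)
    have e1 := min_sum_step e α; have e2 := min_sum_step f α
    omega
  simp only [Nat.card_eq_fintype_card, Fintype.card_subtype]
  rcases k with _ | k
  · rw [Finset.filter_false_of_mem (fun i _ => he i),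
      Finset.filter_false_of_mem (fun j _ => hf j)]
    rfl
  · have s1 := filter_lt_split e k; have s2 := filter_lt_split f k
    have b1 := hB k; have b2 := hB (k + 1)
    omega

private lemma exists_pgroup_decomp (p : ℕ) (hp : p.Prime) (G : Type*) [CommGroup G] [Finite G]
    (hG : ∃ n : ℕ, Nat.card G = p ^ n) :
    ∃ (ι : Type) (_ : Fintype ι) (e : ι → ℕ), (∀ i, e i ≠ 0) ∧
      Nonempty (G ≃* ∀ i, Multiplicative (ZMod (p ^ e i))) := by
  obtain ⟨ι, fι, n, h1, ⟨f⟩⟩ := CommGroup.equiv_prod_multiplicative_zmod_of_finite G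
  obtain ⟨m, hm⟩ := hG
  have hcard : ∀ i, (n i : ℕ) ∣ p ^ m := by
    intro i
    have hGc : Nat.card G = ∏ i, n i := by
      rw [Nat.card_congr f.toEquiv, Nat.card_pi]
      exact Finset.prod_congr rfl fun i _ =>
        (Nat.card_congr Multiplicative.toAdd).trans (Nat.card_zmod _)
    rw [← hm, hGc]
    exact Finset.dvd_prod_of_mem n (Finset.mem_univ i)
  choose e he using fun i => (Nat.dvd_prime_pow hp).1 (hcard i)
  refine ⟨ι, fι, e, fun i => ?_, ⟨f.trans (MulEquiv.piCongrRight fun i =>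
    mulZModCongr (he i).2)⟩⟩
  intro h0
  have := (he i).2
  rw [h0, pow_zero] at this
  exact absurd this (by have := h1 i; omega)

/-- Two finite abelian `p`-groups with the same number of elements of order
`p ^ α` for every `α` are isomorphic. -/
theorem stmt_7 (p : ℕ) (hp : p.Prime)
    (G G' : Type*) [CommGroup G] [Finite G] [CommGroup G'] [Finite G']
    (hG : ∃ n : ℕ, Nat.card G = p ^ n) (hG' : ∃ n : ℕ, Nat.card G' = p ^ n)
    (h : ∀ α : ℕ,
      Nat.card {x : G // orderOf x = p ^ α} =
        Nat.card {x : G' // orderOf x = p ^ α}) :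
    Nonempty (G ≃* G') := by
  classical
  obtain ⟨ι, fι, e, he, ⟨fG⟩⟩ := exists_pgroup_decomp p hp G hG
  obtain ⟨κ, fκ, f, hf, ⟨fG'⟩⟩ := exists_pgroup_decomp p hp G' hG'
  haveI : ∀ i : ι, NeZero (p ^ e i) := fun i => ⟨pow_ne_zero _ hp.pos.ne'⟩
  haveI : ∀ j : κ, NeZero (p ^ f j) := fun j => ⟨pow_ne_zero _ hp.pos.ne'⟩
  have hpow : ∀ α, Nat.card {x : G // x ^ p ^ α = 1} =
      Nat.card {x : G' // x ^ p ^ α = 1} := by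
    intro α
    rw [cardPow_eq_sum_orders hp, cardPow_eq_sum_orders hp]
    exact Finset.sum_congr rfl fun β _ => h β
  have hGα : ∀ α, Nat.card {x : G // x ^ p ^ α = 1} = p ^ ∑ i, min (e i) α := by
    intro α
    calc Nat.card {x : G // x ^ p ^ α = 1}
        = Nat.card {x : ∀ i, Multiplicative (ZMod (p ^ e i)) // x ^ p ^ α = 1} :=
          cardPow_congr fG _
      _ = ∏ i, Nat.card {y : Multiplicative (ZMod (p ^ e i)) // y ^ p ^ α = 1} :=
          cardPow_pi _ _
      _ = ∏ i, p ^ min (e i) α := Finset.prod_congr rfl fun i _ =>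
          cardPow_cyclic hp (by simp [ZMod.card]) α
      _ = p ^ ∑ i, min (e i) α := Finset.prod_pow_eq_pow_sum ..
  have hG'α : ∀ α, Nat.card {x : G' // x ^ p ^ α = 1} = p ^ ∑ j, min (f j) α := by
    intro α
    calc Nat.card {x : G' // x ^ p ^ α = 1}
        = Nat.card {x : ∀ j, Multiplicative (ZMod (p ^ f j)) // x ^ p ^ α = 1} :=
          cardPow_congr fG' _
      _ = ∏ j, Nat.card {y : Multiplicative (ZMod (p ^ f j)) // y ^ p ^ α = 1} :=
          cardPow_pi _ _
      _ = ∏ j, p ^ min (f j) α := Finset.prod_congr rfl fun j _ =>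
          cardPow_cyclic hp (by simp [ZMod.card]) α
      _ = p ^ ∑ j, min (f j) α := Finset.prod_pow_eq_pow_sum ..
  have hsum : ∀ α, ∑ i, min (e i) α = ∑ j, min (f j) α := fun α =>
    Nat.pow_right_injective hp.two_le (by show p ^ _ = p ^ _; rw [← hGα α, ← hG'α α]; exact hpow α)
  have hcnt := count_eq_of_min_sum e f he hf hsum
  let σ : ι ≃ κ := Equiv.ofFiberEquiv (f := e) (g := f) fun k =>
    Fintype.equivOfCardEq (by
      have := hcnt k
      simpa [Nat.card_eq_fintype_card] using this)
  have hσ : ∀ i, f (σ i) = e i := fun i => Equiv.ofFiberEquiv_map _ i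
  refine ⟨fG.trans (((mulPiCongrLeft'
      (fun i => Multiplicative (ZMod (p ^ e i))) σ).trans
      (MulEquiv.piCongrRight fun j => mulZModCongr ?_)).trans fG'.symm)⟩
  rw [← hσ (σ.symm j), Equiv.apply_symm_apply]
end

section
/- Let $G$ and $G'$ be finite abelian groups. If for every positive integer $n$ the number of elements of order $n$ in $G$ equals the number of elements of order $n$ in $G'$, then $G$ and $G'$ are isomorphic as groups. -/
/-!
Write both groups as products of cyclic groups `ZMod (p ^ e)` with `p` prime and `e ≠ 0`.
The number `N k` of solutions of `x ^ k = 1` is a sum of numbers of elements of given order,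
so it is shared by the two groups, and for the product it equals `∏ gcd k (p ^ e)`.
Taking `k = r ^ s` for a prime `r` gives `log_r N (r ^ s) = ∑_{p = r} min s e`, whose second
differences in `s` count the factors `ZMod (r ^ m)`. Hence both groups have the same
elementary divisors with multiplicity.
-/

open Finset

theorem card_pow_eq_one_eq_sum_card_orderOf {G : Type*} [Group G] [Finite G] {k : ℕ}
    (hk : k ≠ 0) :
    Nat.card {x : G // x ^ k = 1} = ∑ m ∈ k.divisors, Nat.card {x : G // orderOf x = m} := by
  classical
  have := Fintype.ofFinite G
  simp only [Nat.card_eq_fintype_card, Fintype.card_subtype]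
  have := sum_card_orderOf_eq_card_pow_eq_one (G := G) hk
  convert this.symm

theorem card_pow_eq_one_eq_of_card_orderOf_eq {G G' : Type*} [Group G] [Group G'] [Finite G]
    [Finite G']
    (h : ∀ n : ℕ, 0 < n → Nat.card {x : G // orderOf x = n} = Nat.card {x : G' // orderOf x = n})
    {k : ℕ} (hk : k ≠ 0) : Nat.card {x : G // x ^ k = 1} = Nat.card {x : G' // x ^ k = 1} := by
  rw [card_pow_eq_one_eq_sum_card_orderOf hk, card_pow_eq_one_eq_sum_card_orderOf hk]
  exact sum_congr rfl fun m hm => h m (Nat.pos_of_mem_divisors hm)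

theorem ZMod.card_nsmul_eq_zero (n k : ℕ) [NeZero n] :
    Nat.card {a : ZMod n // k • a = 0} = k.gcd n := by
  have := IsAddCyclic.card_nsmulAddMonoidHom_ker (ZMod n) k
  rw [Nat.card_zmod] at this
  rw [Nat.gcd_comm, ← this]
  rfl

theorem card_nsmul_eq_zero_pi_zmod {ι : Type*} [Fintype ι] (n : ι → ℕ) [∀ i, NeZero (n i)]
    (k : ℕ) : Nat.card {a : ∀ i, ZMod (n i) // k • a = 0} = ∏ i, k.gcd (n i) := by
  have E : {a : ∀ i, ZMod (n i) // k • a = 0} ≃ ∀ i, {b : ZMod (n i) // k • b = 0} :=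
    (Equiv.subtypeEquivRight fun _ => funext_iff).trans
      (Equiv.subtypePiEquivPi (p := fun _ b => k • b = 0))
  rw [Nat.card_congr E, Nat.card_pi]
  simp only [ZMod.card_nsmul_eq_zero]

theorem card_pow_eq_one_eq_card_nsmul_eq_zero {G A : Type*} [CommGroup G] [AddCommGroup A]
    (F : Additive G ≃+ A) (k : ℕ) : Nat.card {x : G // x ^ k = 1} = Nat.card {a : A // k • a = 0} :=
  Nat.card_congr <| Equiv.subtypeEquiv (Additive.ofMul.trans F.toEquiv) fun x => by
    simp [← map_nsmul, ← ofMul_pow]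

theorem nonempty_addEquiv_pi_subtype {ι : Type*} {M : ι → Type*} [∀ i, AddCommGroup (M i)]
    (P : ι → Prop) (h : ∀ i, ¬ P i → Subsingleton (M i)) :
    Nonempty ((∀ i, M i) ≃+ ∀ i : {i // P i}, M i) := by
  classical
  refine ⟨AddEquiv.ofBijective (AddMonoidHom.pi fun i : {i // P i} => Pi.evalAddMonoidHom M i)
    ⟨fun a b hab => funext fun i => ?_, fun b => ⟨fun i => if hi : P i then b ⟨i, hi⟩ else 0,
      funext fun i => dif_pos i.2⟩⟩⟩
  by_cases hi : P i
  · exact congrFun hab ⟨i, hi⟩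
  · exact (h i hi).elim _ _

theorem AddCommGroup.exists_addEquiv_pi_zmod_prime_pow (A : Type*) [AddCommGroup A] [Finite A] :
    ∃ (ι : Type) (_ : Fintype ι) (p e : ι → ℕ), (∀ i, (p i).Prime) ∧ (∀ i, e i ≠ 0) ∧
      Nonempty (A ≃+ ∀ i, ZMod (p i ^ e i)) := by
  obtain ⟨ι, _, p, hp, e, ⟨F⟩⟩ := AddCommGroup.equiv_directSum_zmod_of_finite A
  obtain ⟨R⟩ := nonempty_addEquiv_pi_subtype (M := fun i => ZMod (p i ^ e i)) (e · ≠ 0)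
    fun i hi => by rw [not_not.mp hi, pow_zero]; infer_instance
  exact ⟨_, inferInstance, fun i : {i // e i ≠ 0} => p i, fun i => e i, fun i => hp i, fun i => i.2,
    ⟨F.trans ((DirectSum.addEquivProd _).trans R)⟩⟩

theorem sum_min_succ {ι : Type*} (s : Finset ι) (e : ι → ℕ) (k : ℕ) :
    ∑ i ∈ s, min (k + 1) (e i) = ∑ i ∈ s, min k (e i) + #{i ∈ s | k < e i} := by
  rw [card_filter, ← sum_add_distrib]
  exact sum_congr rfl fun i _ => by split_ifs <;> omega

theorem card_filter_lt_eq {ι : Type*} (s : Finset ι) (e : ι → ℕ) (m : ℕ) :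
    #{i ∈ s | m < e i} = #{i ∈ s | e i = m + 1} + #{i ∈ s | m + 1 < e i} := by
  rw [card_filter, card_filter, card_filter, ← sum_add_distrib]
  exact sum_congr rfl fun i _ => by split_ifs <;> omega

theorem card_filter_eq_succ_of_sum_min_eq {ι κ : Type*} (s : Finset ι) (t : Finset κ)
    (e : ι → ℕ) (f : κ → ℕ) (h : ∀ k, ∑ i ∈ s, min k (e i) = ∑ j ∈ t, min k (f j)) (m : ℕ) :
    #{i ∈ s | e i = m + 1} = #{j ∈ t | f j = m + 1} := by
  have hlt : ∀ k, #{i ∈ s | k < e i} = #{j ∈ t | k < f j} := fun k => by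
    have := h (k + 1)
    rw [sum_min_succ, sum_min_succ, h k] at this
    omega
  have := hlt m
  rw [card_filter_lt_eq s e m, card_filter_lt_eq t f m, hlt (m + 1)] at this
  omega

theorem Nat.gcd_pow_pow_self (r k e : ℕ) : (r ^ k).gcd (r ^ e) = r ^ min k e := by
  rcases le_total k e with h | h
  · rw [min_eq_left h, Nat.gcd_eq_left (pow_dvd_pow r h)]
  · rw [min_eq_right h, Nat.gcd_eq_right (pow_dvd_pow r h)]

theorem prod_gcd_prime_pow {ι : Type*} (s : Finset ι) {p e : ι → ℕ} (hp : ∀ i, (p i).Prime)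
    {r : ℕ} (hr : r.Prime) (k : ℕ) :
    ∏ i ∈ s, (r ^ k).gcd (p i ^ e i) = r ^ ∑ i ∈ s with p i = r, min k (e i) := by
  rw [← prod_filter_mul_prod_filter_not s (p · = r),
    prod_eq_one fun i hi => Nat.Coprime.pow _ _
      ((Nat.coprime_primes hr (hp i)).mpr (Ne.symm (mem_filter.mp hi).2)), mul_one,
    ← prod_pow_eq_pow_sum]
  exact prod_congr rfl fun i hi => by rw [(mem_filter.mp hi).2, Nat.gcd_pow_pow_self]

theorem card_fiber_eq_of_prod_gcd_eq {ι κ : Type*} [Fintype ι] [Fintype κ]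
    {p e : ι → ℕ} {q f : κ → ℕ} (hp : ∀ i, (p i).Prime) (hq : ∀ j, (q j).Prime)
    (he : ∀ i, e i ≠ 0) (hf : ∀ j, f j ≠ 0)
    (H : ∀ k, k ≠ 0 → ∏ i, k.gcd (p i ^ e i) = ∏ j, k.gcd (q j ^ f j)) (v : ℕ × ℕ) :
    Nat.card {i // (p i, e i) = v} = Nat.card {j // (q j, f j) = v} := by
  classical
  obtain ⟨r, m⟩ := v
  simp only [Nat.card_eq_fintype_card, Fintype.card_subtype, Prod.mk.injEq]
  by_cases hr : r.Prime
  · cases m with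
    | zero => simp [he, hf]
    | succ m =>
      rw [← filter_filter, ← filter_filter]
      refine card_filter_eq_succ_of_sum_min_eq _ _ _ _ (fun k => ?_) m
      have := H (r ^ k) (pow_ne_zero k hr.ne_zero)
      rw [prod_gcd_prime_pow _ hp hr, prod_gcd_prime_pow _ hq hr] at this
      exact Nat.pow_right_injective hr.two_le this
  · have hpr : ∀ i, p i ≠ r := fun i h => hr (h ▸ hp i)
    have hqr : ∀ j, q j ≠ r := fun j h => hr (h ▸ hq j)
    simp [hpr, hqr]

theorem exists_equiv_of_prod_gcd_eq {ι κ : Type*} [Fintype ι] [Fintype κ]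
    {p e : ι → ℕ} {q f : κ → ℕ} (hp : ∀ i, (p i).Prime) (hq : ∀ j, (q j).Prime)
    (he : ∀ i, e i ≠ 0) (hf : ∀ j, f j ≠ 0)
    (H : ∀ k, k ≠ 0 → ∏ i, k.gcd (p i ^ e i) = ∏ j, k.gcd (q j ^ f j)) :
    ∃ σ : ι ≃ κ, ∀ i, q (σ i) = p i ∧ f (σ i) = e i := by
  have E : ∀ v, {i // (p i, e i) = v} ≃ {j // (q j, f j) = v} := fun v =>
    (Finite.card_eq.mp (card_fiber_eq_of_prod_gcd_eq hp hq he hf H v)).some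
  exact ⟨Equiv.ofFiberEquiv E, fun i => Prod.mk.inj (Equiv.ofFiberEquiv_map E i)⟩

theorem nonempty_addEquiv_pi_zmod_of_equiv {ι κ : Type*} {n : ι → ℕ} {n' : κ → ℕ} (σ : ι ≃ κ)
    (h : ∀ i, n' (σ i) = n i) : Nonempty ((∀ i, ZMod (n i)) ≃+ ∀ j, ZMod (n' j)) :=
  ⟨((RingEquiv.piCongrRight fun i => ZMod.ringEquivCongr (h i).symm).trans
    (RingEquiv.piCongrLeft (fun j => ZMod (n' j)) σ)).toAddEquiv⟩

/-- Two finite abelian groups with the same number of elements of order `n`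
for every positive integer `n` are isomorphic. -/
theorem stmt_8 (G G' : Type*) [CommGroup G] [Finite G] [CommGroup G'] [Finite G']
    (h : ∀ n : ℕ, 0 < n →
      Nat.card {x : G // orderOf x = n} = Nat.card {x : G' // orderOf x = n}) :
    Nonempty (G ≃* G') := by
  obtain ⟨ι, _, p, e, hp, he, ⟨F⟩⟩ := AddCommGroup.exists_addEquiv_pi_zmod_prime_pow (Additive G)
  obtain ⟨κ, _, q, f, hq, hf, ⟨F'⟩⟩ :=
    AddCommGroup.exists_addEquiv_pi_zmod_prime_pow (Additive G')
  have := fun i => NeZero.mk (pow_ne_zero (e i) (hp i).ne_zero)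
  have := fun j => NeZero.mk (pow_ne_zero (f j) (hq j).ne_zero)
  have H : ∀ k, k ≠ 0 → ∏ i, k.gcd (p i ^ e i) = ∏ j, k.gcd (q j ^ f j) := fun k hk => by
    rw [← card_nsmul_eq_zero_pi_zmod, ← card_nsmul_eq_zero_pi_zmod,
      ← card_pow_eq_one_eq_card_nsmul_eq_zero F, ← card_pow_eq_one_eq_card_nsmul_eq_zero F']
    exact card_pow_eq_one_eq_of_card_orderOf_eq h hk
  obtain ⟨σ, hσ⟩ := exists_equiv_of_prod_gcd_eq hp hq he hf H
  obtain ⟨Φ⟩ := nonempty_addEquiv_pi_zmod_of_equiv (n := fun i => p i ^ e i)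
    (n' := fun j => q j ^ f j) σ fun i => by rw [(hσ i).1, (hσ i).2]
  exact ⟨MulEquiv.toAdditive.symm (F.trans (Φ.trans F'.symm))⟩
end
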